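/- arXiv:0907.0232 — 2 statements merged into one kernel-verified Lean document; each statement's English description precedes it below -/
import Mathlib

section
/- For every integer n ≥ 2 there exist constants A > 0 and r_* ∈ (0,1) such that for every δ with |δ| ≤ 1/2 and every sufficiently small ε > 0 there exists t_* > 0 with the following property. Set a = (1+δ)(n−1)/4, Λ(r) = 1/(−log r), Γ(r) = F[aΛ](r), and v⁺(r,t) = aΛ(r) + (1+ε)·t·Γ(r). Then ∂_t v⁺(r,t) ≥ F[v⁺(·,t)](r) for all (r,t) with (A/√ε)·√t ≤ r ≤ r_* and 0 < t < t_*. -/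
open Real Set Filter

noncomputable def Fop (n : ℕ) (v : ℝ → ℝ) (r : ℝ) : ℝ :=
  v r * deriv (deriv v) r - (1/2) * (deriv v r)^2
    + (((n : ℝ) - 1 - v r) / r) * deriv v r
    + (2 * ((n : ℝ) - 1) / r^2) * v r * (1 - v r)

/-- `Λ(r) = 1/(-log r)`. -/
noncomputable def Lam (r : ℝ) : ℝ := 1 / (-Real.log r)

/-- The outer-region barrier `v(r,t) = a Λ(r) + b t Γ(r)`, where `Γ = F[aΛ]`. -/
noncomputable def vOuter (n : ℕ) (a b : ℝ) (r t : ℝ) : ℝ :=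
  a * Lam r + b * t * Fop n (fun ρ => a * Lam ρ) r

/-! The barrier is `u + sΓ` with `u = aΛ`, `Γ = F[u]` and `s = (1 + ε)t`. Since `F` is quadratic,
`F[u + sΓ] = Γ + s L + s² Q` exactly, with `L` bilinear in `(u, Γ)` and `Q` quadratic in `Γ`,
whereas `∂ₜ(u + (1 + ε)tΓ) = (1 + ε)Γ`; so it suffices that `s L + s² Q ≤ εΓ`.

Every function in sight has the form `Λ p(Λ) / r^k` with `p` a polynomial, a class closed under
`d/dr` because `Λ' = Λ² / r`. Write `N = n - 1`. If `a ≤ N/2` and `NΛ ≤ 1/4` (which is what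
`r ≤ r_* = e^{-4N}` buys), then `Γ = aΛ γ(Λ) / r²` with `γ(Λ) ≥ N`, while `Γ`, `rΓ'` and `r²Γ''`
are all at most `64 N aΛ / r²`. Hence `|s L| ≲ N (s / r²) Γ` and `|s² Q| ≲ N² (s / r²)² Γ`, and
`s / r² ≲ ε / A²` on the region `A√t ≤ √ε r`. -/

open Polynomial Topology

noncomputable def jetF (N v v₁ v₂ r : ℝ) : ℝ :=
  v * v₂ - 1 / 2 * v₁ ^ 2 + ((N - v) / r) * v₁ + (2 * N / r ^ 2) * v * (1 - v)

noncomputable def jetFLin (N u u₁ u₂ w w₁ w₂ r : ℝ) : ℝ :=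
  u * w₂ + u₂ * w - u₁ * w₁ + ((N - u) / r) * w₁ - w * u₁ / r
    + (2 * N / r ^ 2) * (w - 2 * u * w)

noncomputable def jetFQuad (N w w₁ w₂ r : ℝ) : ℝ :=
  w * w₂ - 1 / 2 * w₁ ^ 2 - w * w₁ / r - (2 * N / r ^ 2) * w ^ 2

theorem jetF_add_smul (N u u₁ u₂ w w₁ w₂ r s : ℝ) :
    jetF N (u + s * w) (u₁ + s * w₁) (u₂ + s * w₂) r
      = jetF N u u₁ u₂ r + s * jetFLin N u u₁ u₂ w w₁ w₂ r + s ^ 2 * jetFQuad N w w₁ w₂ r := by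
  unfold jetF jetFLin jetFQuad
  ring

theorem abs_mul_le_mul_of_abs_le {x y A B : ℝ} (hx : |x| ≤ A) (hy : |y| ≤ B) :
    |x * y| ≤ A * B := by
  rw [abs_mul]
  exact mul_le_mul hx hy (abs_nonneg y) ((abs_nonneg x).trans hx)

theorem abs_jetFLin_mul_sq_le {N M r u u₁ u₂ w w₁ w₂ : ℝ} (hN : 1 ≤ N) (hr : 0 < r)
    (hu : |u| ≤ 1) (hu₁ : |u₁| * r ≤ 1) (hu₂ : |u₂| * r ^ 2 ≤ 1)
    (hw : |w| ≤ M) (hw₁ : |w₁| * r ≤ M) (hw₂ : |w₂| * r ^ 2 ≤ M) :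
    |jetFLin N u u₁ u₂ w w₁ w₂ r * r ^ 2| ≤ 12 * N * M := by
  rw [← abs_of_pos hr, ← abs_mul] at hu₁ hw₁
  rw [← abs_of_pos (pow_pos hr 2), ← abs_mul] at hu₂ hw₂
  have e : jetFLin N u u₁ u₂ w w₁ w₂ r * r ^ 2 = u * (w₂ * r ^ 2) + (u₂ * r ^ 2) * w
      - (u₁ * r) * (w₁ * r) + (N - u) * (w₁ * r) - w * (u₁ * r) + 2 * N * (w - 2 * (u * w)) := by
    unfold jetFLin
    field_simp
  have hNu : |N - u| ≤ N + 1 := (abs_sub _ _).trans (by rw [abs_of_pos (by linarith)]; linarith)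
  have h₁ := abs_le.mp (abs_mul_le_mul_of_abs_le hu hw₂)
  have h₂ := abs_le.mp (abs_mul_le_mul_of_abs_le hu₂ hw)
  have h₃ := abs_le.mp (abs_mul_le_mul_of_abs_le hu₁ hw₁)
  have h₄ := abs_le.mp (abs_mul_le_mul_of_abs_le hNu hw₁)
  have h₅ := abs_le.mp (abs_mul_le_mul_of_abs_le hw hu₁)
  have h₆ := abs_le.mp (abs_mul_le_mul_of_abs_le hu hw)
  have h₇ := abs_le.mp hw
  rw [e, abs_le]
  constructor <;> nlinarith

theorem abs_jetFQuad_mul_sq_le {N M r w w₁ w₂ : ℝ} (hN : 1 ≤ N) (hr : 0 < r)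
    (hw : |w| ≤ M) (hw₁ : |w₁| * r ≤ M) (hw₂ : |w₂| * r ^ 2 ≤ M) :
    |jetFQuad N w w₁ w₂ r * r ^ 2| ≤ 5 * N * M ^ 2 := by
  rw [← abs_of_pos hr, ← abs_mul] at hw₁
  rw [← abs_of_pos (pow_pos hr 2), ← abs_mul] at hw₂
  have e : jetFQuad N w w₁ w₂ r * r ^ 2
      = w * (w₂ * r ^ 2) - 1 / 2 * (w₁ * r) ^ 2 - w * (w₁ * r) - 2 * N * w ^ 2 := by
    unfold jetFQuad
    field_simp
  have h₁ := abs_le.mp (abs_mul_le_mul_of_abs_le hw hw₂)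
  have h₂ := abs_le.mp (abs_mul_le_mul_of_abs_le hw₁ hw₁)
  have h₃ := abs_le.mp (abs_mul_le_mul_of_abs_le hw hw₁)
  have h₄ := abs_le.mp (abs_mul_le_mul_of_abs_le hw hw)
  rw [e, abs_le]
  constructor <;> nlinarith

theorem add_mul_add_sq_mul_le {N M r s ε L Q : ℝ} (hM : 0 ≤ M) (hMr : M * r ^ 2 ≤ 64 * N)
    (hr : 0 < r) (hs : 0 ≤ s) (hε₀ : 0 ≤ ε) (hε : ε ≤ 1) (hsr : 1000 * N * s ≤ ε * r ^ 2)
    (hL : |L * r ^ 2| ≤ 12 * N * M) (hQ : |Q * r ^ 2| ≤ 5 * N * M ^ 2) :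
    s * L + s ^ 2 * Q ≤ ε * M / 64 := by
  obtain ⟨σ, hσ, rfl⟩ : ∃ σ, 0 ≤ σ ∧ s = σ * r ^ 2 := ⟨s / r ^ 2, by positivity, by field_simp⟩
  have hNσ : N * σ ≤ ε / 1000 := by
    have := hsr.trans_eq' (by ring : 1000 * N * (σ * r ^ 2) = (1000 * (N * σ)) * r ^ 2)
    have := le_of_mul_le_mul_right this (by positivity)
    linarith
  calc σ * r ^ 2 * L + (σ * r ^ 2) ^ 2 * Q
      = σ * (L * r ^ 2) + σ ^ 2 * r ^ 2 * (Q * r ^ 2) := by ring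
    _ ≤ σ * (12 * N * M) + σ ^ 2 * r ^ 2 * (5 * N * M ^ 2) :=
        add_le_add (mul_le_mul_of_nonneg_left (abs_le.mp hL).2 hσ)
          (mul_le_mul_of_nonneg_left (abs_le.mp hQ).2 (by positivity))
    _ = 12 * M * (N * σ) + 5 * (N * σ) * σ * M * (M * r ^ 2) := by ring
    _ ≤ 12 * M * (ε / 1000) + 5 * (ε / 1000) * σ * M * (64 * N) := by gcongr
    _ = 12 * M * (ε / 1000) + 320 * (ε / 1000) * M * (N * σ) := by ring
    _ ≤ 12 * M * (ε / 1000) + 320 * (ε / 1000) * M * (ε / 1000) := by gcongr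
    _ ≤ ε * M / 64 := by nlinarith [mul_nonneg hε₀ hM, mul_nonneg (mul_nonneg hε₀ hε₀) hM]

theorem Fop_eq_jetF {n : ℕ} {v v' : ℝ → ℝ} {v'' r : ℝ}
    (hv : ∀ᶠ ρ in 𝓝 r, HasDerivAt v (v' ρ) ρ) (hv' : HasDerivAt v' v'' r) :
    Fop n v r = jetF ((n : ℝ) - 1) (v r) (v' r) v'' r := by
  have hd : deriv v =ᶠ[𝓝 r] v' := hv.mono fun ρ h => h.deriv
  rw [Fop, jetF, hd.deriv_eq, hv'.deriv, hv.self_of_nhds.deriv]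

theorem Fop_add_smul {n : ℕ} {u u' w w' : ℝ → ℝ} {u'' w'' r : ℝ} (s : ℝ)
    (hu : ∀ᶠ ρ in 𝓝 r, HasDerivAt u (u' ρ) ρ) (hu' : HasDerivAt u' u'' r)
    (hw : ∀ᶠ ρ in 𝓝 r, HasDerivAt w (w' ρ) ρ) (hw' : HasDerivAt w' w'' r) :
    Fop n (fun ρ => u ρ + s * w ρ) r = Fop n u r
      + s * jetFLin ((n : ℝ) - 1) (u r) (u' r) u'' (w r) (w' r) w'' r
      + s ^ 2 * jetFQuad ((n : ℝ) - 1) (w r) (w' r) w'' r := by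
  have hv : ∀ᶠ ρ in 𝓝 r, HasDerivAt (fun ρ => u ρ + s * w ρ) (u' ρ + s * w' ρ) ρ :=
    (hu.and hw).mono fun ρ h => h.1.add (h.2.const_mul s)
  rw [Fop_eq_jetF hv (hu'.add (hw'.const_mul s)), Fop_eq_jetF hu hu', jetF_add_smul]

theorem Lam_pos {r : ℝ} (hr : 0 < r) (hr₁ : r < 1) : 0 < Lam r :=
  one_div_pos.mpr (neg_pos.mpr (Real.log_neg hr hr₁))

theorem mul_Lam_le_one {c r : ℝ} (hc : 0 < c) (hr : 0 < r) (hrc : r ≤ exp (-c)) :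
    c * Lam r ≤ 1 := by
  have hlog : c ≤ -Real.log r := by
    linarith [Real.log_le_log hr hrc, Real.log_exp (-c)]
  rw [Lam, mul_one_div, div_le_one (hc.trans_le hlog)]
  exact hlog

theorem hasDerivAt_Lam {r : ℝ} (hr : 0 < r) (hr₁ : r ≠ 1) :
    HasDerivAt Lam (Lam r ^ 2 / r) r := by
  have hlog : Real.log r ≠ 0 := Real.log_ne_zero_of_pos_of_ne_one hr hr₁
  have h : HasDerivAt (fun ρ => (-Real.log ρ)⁻¹) (-(-r⁻¹) / (-Real.log r) ^ 2) r :=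
    (Real.hasDerivAt_log hr.ne').neg.inv (neg_ne_zero.mpr hlog)
  rw [show Lam = fun ρ => (-Real.log ρ)⁻¹ from funext fun ρ => one_div _]
  convert h using 1
  field_simp

noncomputable def radialDeriv (k : ℕ) (p : ℝ[X]) : ℝ[X] :=
  X * p + X ^ 2 * derivative p - C (k : ℝ) * p

noncomputable def profile (p : ℝ[X]) (k : ℕ) (ρ : ℝ) : ℝ := Lam ρ * p.eval (Lam ρ) / ρ ^ k

theorem profile_one_zero : profile 1 0 = Lam := funext fun ρ => by simp [profile]

theorem hasDerivAt_profile (p : ℝ[X]) (k : ℕ) {r : ℝ} (hr : 0 < r) (hr₁ : r ≠ 1) :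
    HasDerivAt (profile p k) (profile (radialDeriv k p) (k + 1) r) r := by
  have hΛ := hasDerivAt_Lam hr hr₁
  have h : HasDerivAt (profile p k) _ r :=
    (hΛ.mul ((p.hasDerivAt (Lam r)).comp r hΛ)).div (hasDerivAt_pow k r) (pow_ne_zero k hr.ne')
  have hk : (k : ℝ) * r ^ (k - 1) = k * r ^ k / r := by
    rcases k with _ | k
    · simp
    · field_simp
      simp [pow_succ]
  convert h using 1
  rw [hk]
  simp only [profile, radialDeriv, eval_add, eval_sub, eval_mul, eval_X, eval_pow, eval_C,
    Function.comp_apply, Pi.mul_apply]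
  field_simp
  ring

theorem eventually_hasDerivAt_profile (p : ℝ[X]) (k : ℕ) (a : ℝ) {r : ℝ} (hr : r ∈ Ioo 0 1) :
    ∀ᶠ ρ in 𝓝 r, HasDerivAt (fun ρ => a * profile p k ρ)
      (a * profile (radialDeriv k p) (k + 1) ρ) ρ :=
  Filter.mem_of_superset (Ioo_mem_nhds hr.1 hr.2) fun _ hρ =>
    (hasDerivAt_profile p k hρ.1 hρ.2.ne).const_mul a

theorem abs_const_mul_profile_mul_pow_le {p : ℝ[X]} {k : ℕ} {a C r : ℝ} (ha : 0 ≤ a)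
    (hr : 0 < r) (hr₁ : r < 1) (hp : |p.eval (Lam r)| ≤ C) :
    |a * profile p k r| * r ^ k ≤ a * Lam r * C := by
  have hl := Lam_pos hr hr₁
  rw [profile, abs_mul, abs_div, abs_mul, abs_of_nonneg ha, abs_of_pos hl,
    abs_of_pos (pow_pos hr k), mul_div_assoc', div_mul_cancel₀ _ (pow_pos hr k).ne', mul_assoc]
  gcongr

theorem radialDeriv_zero_one : radialDeriv 0 1 = X := by
  simp [radialDeriv]

theorem eval_radialDeriv_one_X (l : ℝ) : (radialDeriv 1 X).eval l = 2 * l ^ 2 - l := by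
  simp [radialDeriv]
  ring

theorem eventually_hasDerivAt_const_mul_Lam (a : ℝ) {r : ℝ} (hr : r ∈ Ioo 0 1) :
    ∀ᶠ ρ in 𝓝 r, HasDerivAt (fun ρ => a * Lam ρ) (a * profile X 1 ρ) ρ := by
  have h := eventually_hasDerivAt_profile 1 0 a hr
  rwa [profile_one_zero, radialDeriv_zero_one] at h

theorem abs_const_mul_Lam_jets_le {a r : ℝ} (ha : 0 ≤ a) (hr : r ∈ Ioo 0 1) (hl : Lam r ≤ 1 / 4)
    (hal : a * Lam r ≤ 1) :
    |a * Lam r| ≤ 1 ∧ |a * profile X 1 r| * r ≤ 1 ∧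
      |a * profile (radialDeriv 1 X) 2 r| * r ^ 2 ≤ 1 := by
  have hl₀ := Lam_pos hr.1 hr.2
  refine ⟨by rwa [abs_of_nonneg (by positivity)], ?_, ?_⟩
  · have := abs_const_mul_profile_mul_pow_le (p := X) (k := 1) (C := Lam r) ha hr.1 hr.2
      (by rw [eval_X, abs_of_pos hl₀])
    rw [pow_one] at this
    nlinarith
  · have := abs_const_mul_profile_mul_pow_le (p := radialDeriv 1 X) (k := 2) (C := 1) ha hr.1 hr.2
      (by rw [eval_radialDeriv_one_X, abs_le]; constructor <;> nlinarith)
    linarith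

noncomputable def gammaPoly (N a : ℝ) : ℝ[X] :=
  C (2 * N) + C (N - 2 * a * N) * X - C (2 * a) * X ^ 2 + C (3 / 2 * a) * X ^ 3

theorem eval_gammaPoly (N a l : ℝ) :
    (gammaPoly N a).eval l = 2 * N + (N - 2 * a * N) * l - 2 * a * l ^ 2 + 3 / 2 * a * l ^ 3 := by
  simp [gammaPoly]

theorem eval_radialDeriv_gammaPoly (N a l : ℝ) :
    (radialDeriv 2 (gammaPoly N a)).eval l = -4 * N + 4 * a * N * l
      + (2 * N + 4 * a - 4 * a * N) * l ^ 2 - 9 * a * l ^ 3 + 6 * a * l ^ 4 := by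
  simp [radialDeriv, gammaPoly]
  ring

theorem eval_radialDeriv_radialDeriv_gammaPoly (N a l : ℝ) :
    (radialDeriv 3 (radialDeriv 2 (gammaPoly N a))).eval l = 12 * N - (4 * N + 12 * a * N) * l
      + (20 * a * N - 6 * N - 12 * a) * l ^ 2 + (6 * N + 39 * a - 12 * a * N) * l ^ 3
      - 54 * a * l ^ 4 + 30 * a * l ^ 5 := by
  simp [radialDeriv, gammaPoly]
  ring

theorem gammaPoly_bounds {N a l : ℝ} (hN : 1 ≤ N) (ha : 0 < a) (haN : a ≤ N / 2) (hl : 0 < l)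
    (hNl : N * l ≤ 1 / 4) :
    N ≤ (gammaPoly N a).eval l ∧ |(gammaPoly N a).eval l| ≤ 64 * N ∧
      |(radialDeriv 2 (gammaPoly N a)).eval l| ≤ 64 * N ∧
      |(radialDeriv 3 (radialDeriv 2 (gammaPoly N a))).eval l| ≤ 64 * N := by
  have hl₄ : l ≤ 1 / 4 := by nlinarith
  have hal : a * l ≤ 1 / 8 := by nlinarith
  have haNl : a * (N * l) ≤ N / 8 := by nlinarith
  have hal₀ : 0 ≤ a * l := by positivity
  have hNl₀ : 0 ≤ N * l := by positivity
  have haNl₀ : 0 ≤ a * (N * l) := by positivity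
  rw [eval_gammaPoly, eval_radialDeriv_gammaPoly, eval_radialDeriv_radialDeriv_gammaPoly,
    abs_le, abs_le, abs_le]
  refine ⟨?_, ⟨?_, ?_⟩, ⟨?_, ?_⟩, ⟨?_, ?_⟩⟩ <;>
    nlinarith [mul_le_mul hal hl₄ hl.le (by norm_num), mul_nonneg hal₀ hl.le,
      mul_nonneg hNl₀ hl.le, mul_nonneg haNl₀ hl.le, mul_nonneg (mul_nonneg hal₀ hl.le) hl.le,
      mul_nonneg (mul_nonneg hNl₀ hl.le) hl.le, mul_nonneg (mul_nonneg haNl₀ hl.le) hl.le,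
      mul_nonneg (mul_nonneg (mul_nonneg hal₀ hl.le) hl.le) hl.le]

theorem Fop_const_mul_Lam (n : ℕ) (a : ℝ) {r : ℝ} (hr : r ∈ Ioo 0 1) :
    Fop n (fun ρ => a * Lam ρ) r = a * profile (gammaPoly ((n : ℝ) - 1) a) 2 r := by
  rw [Fop_eq_jetF (eventually_hasDerivAt_const_mul_Lam a hr)
    (eventually_hasDerivAt_profile X 1 a hr).self_of_nhds]
  simp only [jetF, profile, eval_X, eval_radialDeriv_one_X, eval_gammaPoly]
  field_simp
  ring

theorem eventually_hasDerivAt_Fop_const_mul_Lam (n : ℕ) (a : ℝ) {r : ℝ} (hr : r ∈ Ioo 0 1) :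
    ∀ᶠ ρ in 𝓝 r, HasDerivAt (Fop n (fun ρ => a * Lam ρ))
      (a * profile (radialDeriv 2 (gammaPoly ((n : ℝ) - 1) a)) 3 ρ) ρ := by
  have hΓ : ∀ ρ ∈ Ioo (0 : ℝ) 1, Fop n (fun ρ => a * Lam ρ) =ᶠ[𝓝 ρ]
      fun ρ => a * profile (gammaPoly ((n : ℝ) - 1) a) 2 ρ := fun ρ hρ =>
    Filter.mem_of_superset (Ioo_mem_nhds hρ.1 hρ.2) fun _ h => Fop_const_mul_Lam n a h
  exact Filter.mem_of_superset (Ioo_mem_nhds hr.1 hr.2) fun ρ hρ =>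
    (eventually_hasDerivAt_profile _ 2 a hρ).self_of_nhds.congr_of_eventuallyEq (hΓ ρ hρ)

section GammaJets

variable {N a r : ℝ} (hN : 1 ≤ N) (ha : 0 < a) (haN : a ≤ N / 2) (hr : r ∈ Ioo 0 1)
  (hNl : N * Lam r ≤ 1 / 4)
include hN ha haN hr hNl

theorem le_const_mul_profile_gammaPoly :
    N * (a * Lam r) / r ^ 2 ≤ a * profile (gammaPoly N a) 2 r := by
  have hl := Lam_pos hr.1 hr.2
  have hγ := (gammaPoly_bounds hN ha haN hl hNl).1
  rw [profile, mul_div_assoc']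
  gcongr ?_ / _
  nlinarith [mul_le_mul_of_nonneg_left hγ (mul_pos ha hl).le]

theorem abs_gamma_jets_le {M : ℝ} (hM : M * r ^ 2 = 64 * N * (a * Lam r)) :
    |a * profile (gammaPoly N a) 2 r| ≤ M ∧
      |a * profile (radialDeriv 2 (gammaPoly N a)) 3 r| * r ≤ M ∧
      |a * profile (radialDeriv 3 (radialDeriv 2 (gammaPoly N a))) 4 r| * r ^ 2 ≤ M := by
  obtain ⟨-, hγ₀, hγ₁, hγ₂⟩ := gammaPoly_bounds hN ha haN (Lam_pos hr.1 hr.2) hNl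
  have hr₂ : 0 < r ^ 2 := pow_pos hr.1 2
  have hwM {p : ℝ[X]} {k : ℕ} (hp : |p.eval (Lam r)| ≤ 64 * N) :
      |a * profile p k r| * r ^ k ≤ M * r ^ 2 := by
    rw [hM]
    linarith [abs_const_mul_profile_mul_pow_le (k := k) ha.le hr.1 hr.2 hp]
  refine ⟨le_of_mul_le_mul_right (hwM hγ₀) hr₂, ?_, ?_⟩
  · have := hwM (k := 3) hγ₁
    nlinarith [hr.1]
  · have := hwM (k := 4) hγ₂
    nlinarith [hr.1]

end GammaJets

theorem Fop_vOuter_le {n : ℕ} {a b t ε r : ℝ} (hN : 1 ≤ (n : ℝ) - 1) (ha : 0 < a)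
    (haN : a ≤ ((n : ℝ) - 1) / 2) (hr : r ∈ Ioo 0 1) (hNl : ((n : ℝ) - 1) * Lam r ≤ 1 / 4)
    (hbt : 0 ≤ b * t) (hε₀ : 0 ≤ ε) (hε : ε ≤ 1)
    (hsr : 1000 * ((n : ℝ) - 1) * (b * t) ≤ ε * r ^ 2) :
    Fop n (fun ρ => vOuter n a b ρ t) r ≤ (1 + ε) * Fop n (fun ρ => a * Lam ρ) r := by
  rw [show (fun ρ => vOuter n a b ρ t)
      = fun ρ => a * Lam ρ + b * t * Fop n (fun ρ => a * Lam ρ) ρ from rfl,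
    Fop_add_smul (b * t) (eventually_hasDerivAt_const_mul_Lam a hr)
      (eventually_hasDerivAt_profile X 1 a hr).self_of_nhds
      (eventually_hasDerivAt_Fop_const_mul_Lam n a hr)
      (eventually_hasDerivAt_profile _ 3 a hr).self_of_nhds,
    Fop_const_mul_Lam n a hr]
  set N := (n : ℝ) - 1
  have hl := Lam_pos hr.1 hr.2
  have hr₂ : 0 < r ^ 2 := pow_pos hr.1 2
  obtain ⟨hu₀, hu₁, hu₂⟩ := abs_const_mul_Lam_jets_le ha.le hr (by nlinarith) (by nlinarith)
  set M := 64 * N * (a * Lam r) / r ^ 2 with hM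
  obtain ⟨hw₀, hw₁, hw₂⟩ := abs_gamma_jets_le hN ha haN hr hNl (M := M) (div_mul_cancel₀ _ hr₂.ne')
  have hΓ := le_const_mul_profile_gammaPoly hN ha haN hr hNl
  have key := add_mul_add_sq_mul_le (by positivity)
    (by rw [div_mul_cancel₀ _ hr₂.ne']; nlinarith) hr.1 hbt hε₀ hε hsr
    (abs_jetFLin_mul_sq_le hN hr.1 hu₀ hu₁ hu₂ hw₀ hw₁ hw₂)
    (abs_jetFQuad_mul_sq_le hN hr.1 hw₀ hw₁ hw₂)
  have hM64 : M / 64 = N * (a * Lam r) / r ^ 2 := by rw [hM]; ring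
  nlinarith [mul_le_mul_of_nonneg_left hΓ hε₀]

theorem deriv_vOuter_time (n : ℕ) (a b r t : ℝ) :
    deriv (fun s => vOuter n a b r s) t = b * Fop n (fun ρ => a * Lam ρ) r := by
  have h := (((hasDerivAt_id t).const_mul b).mul_const (Fop n (fun ρ => a * Lam ρ) r)).const_add
    (a * Lam r)
  rw [show (fun s => vOuter n a b r s)
      = fun s => a * Lam r + b * id s * Fop n (fun ρ => a * Lam ρ) r from rfl, h.deriv, mul_one]

theorem sq_mul_le_of_div_sqrt_mul_sqrt_le {A ε t r : ℝ} (hA : 0 ≤ A) (hε : 0 < ε) (ht : 0 ≤ t)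
    (h : A / √ε * √t ≤ r) : A ^ 2 * t ≤ ε * r ^ 2 := by
  have h' : A * √t ≤ r * √ε := by
    rwa [div_mul_eq_mul_div, div_le_iff₀ (Real.sqrt_pos.mpr hε)] at h
  have := pow_le_pow_left₀ (by positivity) h' 2
  rw [mul_pow, mul_pow, Real.sq_sqrt ht, Real.sq_sqrt hε.le] at this
  linarith

/-- Outer-region supersolution: with `a = (1+δ)(n-1)/4`,
`v⁺(r,t) = aΛ(r) + (1+ε) t F[aΛ](r)` is a supersolution for `(A/√ε)√t ≤ r ≤ r_*`, `0 < t < t_*`. -/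
theorem stmt3 (n : ℕ) (hn : 2 ≤ n) :
    ∃ A > (0:ℝ), ∃ rstar ∈ Ioo (0:ℝ) 1,
      ∀ δ : ℝ, |δ| ≤ 1/2 →
        ∃ ε₀ > (0:ℝ), ∀ ε : ℝ, 0 < ε → ε < ε₀ →
          ∃ tstar > (0:ℝ),
            ∀ r t : ℝ, A / Real.sqrt ε * Real.sqrt t ≤ r → r ≤ rstar →
              0 < t → t < tstar →
              Fop n (fun ρ => vOuter n ((1 + δ) * ((n:ℝ) - 1) / 4) (1 + ε) ρ t) r ≤
                deriv (fun s => vOuter n ((1 + δ) * ((n:ℝ) - 1) / 4) (1 + ε) r s) t := by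
  set N : ℝ := (n : ℝ) - 1
  have hN : 1 ≤ N := by
    have : (2 : ℝ) ≤ n := by exact_mod_cast hn
    linarith
  have hrstar : exp (-(4 * N)) < 1 := exp_lt_one_iff.mpr (by linarith)
  refine ⟨2000 * N, by positivity, _, ⟨exp_pos _, hrstar⟩, fun δ hδ =>
    ⟨1 / 2, by norm_num, fun ε hε hε₂ => ⟨1, one_pos, fun r t hAr hr ht _ => ?_⟩⟩⟩
  obtain ⟨hδ₁, hδ₂⟩ := abs_le.mp hδ
  have hr₀ : 0 < r := lt_of_lt_of_le (by positivity) hAr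
  have hNl := mul_Lam_le_one (by linarith) hr₀ hr
  have hAt := sq_mul_le_of_div_sqrt_mul_sqrt_le (by positivity) hε ht.le hAr
  rw [deriv_vOuter_time]
  refine Fop_vOuter_le hN (by nlinarith) (by nlinarith) ⟨hr₀, hr.trans_lt hrstar⟩ (by linarith)
    (by positivity) hε.le (by linarith) (hAt.trans' ?_)
  nlinarith [mul_nonneg (mul_nonneg (by linarith : 0 ≤ N - 1) (by linarith : 0 ≤ N)) ht.le,
    mul_nonneg (mul_nonneg hε.le (by linarith : 0 ≤ N)) ht.le]
end

section
/- Let n ≥ 2 be an integer, let A > 0 and ε > 0, and set ρ_* = A/√ε and W₀(ρ) = ((n−1)/2)·(1 + 2(n−1)/ρ²). There exist B > 1 and t_* ∈ (0, 1/e) such that for every γ ∈ [0, 1/2], the function v⁺(r,t) = (1/(−log t))·[ (1+γ)·W₀(r/√t) + B²/((−log t)·(r/√t)⁴) ] satisfies ∂_t v⁺(r,t) ≥ F[v⁺(·,t)](r) for all (r,t) with (B/√ε)·√(t/(−log t)) ≤ r ≤ 3ρ_*·√t and 0 < t < t_*. -/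
/-!
At a fixed time `t`, with `s = -log t` and `m = n - 1`, the function `v⁺` is a Laurent polynomial
`a + b r⁻² + d r⁻⁴` in `r`, so `F[v⁺]` is a polynomial in `r⁻²` of degree five, and `∂ₜv⁺` is one
of degree two. In `∂ₜv⁺ - F[v⁺]` the coefficients of `1`, `r⁻²` and `r⁻⁴` are nonnegative, and the
remaining terms are `2t²/(s⁴r⁶)` times a quadratic in `w = B²t/r²` whose leading part `m B² s²`
absorbs all the others once `s ≥ 36`, `B ≥ 10 m (1 + ε)` and `w ≤ ε s`; the last condition is
exactly the lower bound on `r`.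
-/

open Real Set Filter

/-- `W₀(ρ) = ((n-1)/2)(1 + 2(n-1)/ρ²)`. -/
noncomputable def W0 (n : ℕ) (ρ : ℝ) : ℝ :=
  (((n:ℝ) - 1) / 2) * (1 + 2 * ((n:ℝ) - 1) / ρ^2)

/-- The parabolic-region supersolution
`v⁺(r,t) = (1/(-log t))·[(1+γ)W₀(r/√t) + B²/((-log t)(r/√t)⁴)]`. -/
noncomputable def vParSup (n : ℕ) (γ B : ℝ) (r t : ℝ) : ℝ :=
  (1 / (-Real.log t)) *
    ((1 + γ) * W0 n (r / Real.sqrt t) + B^2 / ((-Real.log t) * (r / Real.sqrt t)^4))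

open Topology

noncomputable def evenLaurent (a b d ρ : ℝ) : ℝ := a + b / ρ ^ 2 + d / ρ ^ 4

theorem hasDerivAt_const_div_pow (c : ℝ) (k : ℕ) {r : ℝ} (hr : r ≠ 0) :
    HasDerivAt (fun x : ℝ => c / x ^ k) (-k * c / r ^ (k + 1)) r := by
  refine ((hasDerivAt_const r c).fun_div (hasDerivAt_pow k r) (pow_ne_zero k hr)).congr_deriv ?_
  rcases k with _ | k
  · simp
  · simp only [Nat.add_sub_cancel]
    field_simp
    ring

theorem hasDerivAt_evenLaurent (a b d : ℝ) {r : ℝ} (hr : r ≠ 0) :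
    HasDerivAt (evenLaurent a b d) (-2 * b / r ^ 3 - 4 * d / r ^ 5) r := by
  refine (((hasDerivAt_const r a).fun_add (hasDerivAt_const_div_pow b 2 hr)).fun_add
    (hasDerivAt_const_div_pow d 4 hr)).congr_deriv ?_
  push_cast
  ring

theorem deriv_evenLaurent_eventuallyEq (a b d : ℝ) {r : ℝ} (hr : r ≠ 0) :
    deriv (evenLaurent a b d) =ᶠ[𝓝 r] fun ρ => -2 * b / ρ ^ 3 + -4 * d / ρ ^ 5 := by
  filter_upwards [eventually_ne_nhds hr] with ρ hρ
  rw [(hasDerivAt_evenLaurent a b d hρ).deriv]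
  ring

theorem deriv_deriv_evenLaurent (a b d : ℝ) {r : ℝ} (hr : r ≠ 0) :
    deriv (deriv (evenLaurent a b d)) r = 6 * b / r ^ 4 + 20 * d / r ^ 6 := by
  rw [(deriv_evenLaurent_eventuallyEq a b d hr).deriv_eq,
    ((hasDerivAt_const_div_pow _ 3 hr).fun_add (hasDerivAt_const_div_pow _ 5 hr)).deriv]
  push_cast
  ring

theorem Fop_evenLaurent (n : ℕ) (a b d : ℝ) {r : ℝ} (hr : r ≠ 0) :
    Fop n (evenLaurent a b d) r =
      2 * (n - 1) * a * (1 - a) / r ^ 2 + 4 * a * b * (3 - n) / r ^ 4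
        + (24 * a * d + 6 * b ^ 2 - 2 * (n - 1) * (d + b ^ 2 + 2 * a * d)) / r ^ 6
        + 4 * b * d * (7 - n) / r ^ 8 + 2 * d ^ 2 * (9 - n) / r ^ 10 := by
  rw [Fop, deriv_deriv_evenLaurent a b d hr, (hasDerivAt_evenLaurent a b d hr).deriv, evenLaurent]
  field_simp
  ring

theorem hasDerivAt_pow_div_neg_log_pow (j k : ℕ) {t : ℝ} (ht : t ≠ 0) (hlog : Real.log t ≠ 0) :
    HasDerivAt (fun τ => τ ^ j / (-Real.log τ) ^ k)
      (t ^ j / t * (j / (-Real.log t) ^ k + k / (-Real.log t) ^ (k + 1))) t := by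
  refine ((hasDerivAt_pow j t).fun_div ((Real.hasDerivAt_log ht).fun_neg.fun_pow k)
    (pow_ne_zero k (neg_ne_zero.mpr hlog))).congr_deriv ?_
  have hL : -Real.log t ≠ 0 := neg_ne_zero.mpr hlog
  generalize -Real.log t = L at hL ⊢
  rcases j with _ | j <;> rcases k with _ | k
  all_goals
    push_cast [Nat.add_sub_cancel]
    field_simp
    ring

theorem vParSup_eq_evenLaurent (n : ℕ) (γ B r : ℝ) {t : ℝ} (ht : 0 ≤ t) :
    vParSup n γ B r t =
      evenLaurent ((1 + γ) * (n - 1) / (2 * -Real.log t)) ((1 + γ) * (n - 1) ^ 2 * t / -Real.log t)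
        (B ^ 2 * t ^ 2 / (-Real.log t) ^ 2) r := by
  have h2 : (r / √t) ^ 2 = r ^ 2 / t := by rw [div_pow, sq_sqrt ht]
  have h4 : (r / √t) ^ 4 = (r ^ 2 / t) ^ 2 := by rw [← h2]; ring
  rw [vParSup, W0, evenLaurent, h2, h4]
  simp only [div_eq_mul_inv, mul_inv, mul_pow, inv_pow, inv_inv]
  ring

theorem hasDerivAt_vParSup_time (n : ℕ) (γ B r : ℝ) {t : ℝ} (ht : 0 < t) (hlog : Real.log t ≠ 0) :
    HasDerivAt (fun τ => vParSup n γ B r τ)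
      ((1 + γ) * (n - 1) / (2 * t * (-Real.log t) ^ 2)
        + (1 + γ) * (n - 1) ^ 2 * (1 / -Real.log t + 1 / (-Real.log t) ^ 2) / r ^ 2
        + B ^ 2 * (2 * t / (-Real.log t) ^ 2 + 2 * t / (-Real.log t) ^ 3) / r ^ 4) t := by
  have hsum :=
    (((hasDerivAt_pow_div_neg_log_pow 0 1 ht.ne' hlog).const_mul ((1 + γ) * (n - 1) / 2)).fun_add
      ((hasDerivAt_pow_div_neg_log_pow 1 1 ht.ne' hlog).const_mul
        ((1 + γ) * (n - 1) ^ 2 / r ^ 2))).fun_add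
      ((hasDerivAt_pow_div_neg_log_pow 2 2 ht.ne' hlog).const_mul (B ^ 2 / r ^ 4))
  refine (hsum.congr_of_eventuallyEq ?_).congr_deriv ?_
  · filter_upwards [lt_mem_nhds ht] with τ hτ
    rw [vParSup_eq_evenLaurent n γ B r hτ.le, evenLaurent]
    ring
  · have hL : -Real.log t ≠ 0 := neg_ne_zero.mpr hlog
    generalize -Real.log t = L at hL ⊢
    push_cast
    field_simp
    ring

theorem supersolution_remainder_nonneg {m g B ε s w : ℝ} (hm : 1 ≤ m) (hg0 : 0 ≤ g)
    (hg : g ≤ 3 / 2) (hs : 36 ≤ s) (hB : 10 * m * (1 + ε) ≤ B) (hw0 : 0 ≤ w) (hw : w ≤ ε * s) :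
    0 ≤ m * B ^ 2 * s ^ 2 + (m - 6) * g * m * B ^ 2 * s + g ^ 2 * m ^ 4 * (m - 3) * s ^ 2
      + 2 * (m - 6) * g * m ^ 2 * s * w + (m - 8) * w ^ 2 := by
  have hε : 0 ≤ ε := nonneg_of_mul_nonneg_left (hw0.trans hw) (by linarith)
  have hB0 : 10 * m ≤ B := by nlinarith
  have hBm : 100 * m ^ 2 * (1 + ε) ≤ B ^ 2 := by
    nlinarith [mul_le_mul hB hB0 (by positivity) (by linarith)]
  have hBε : (10 * m * ε) ^ 2 ≤ B ^ 2 := pow_le_pow_left₀ (by positivity) (by nlinarith) 2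
  have hmg : 0 ≤ (m - 6) * g + 9 := by nlinarith
  -- each of the four lower-order terms is absorbed by a quarter of `m B² s²`
  have h1 : 0 ≤ m * B ^ 2 * s ^ 2 / 4 + (m - 6) * g * m * B ^ 2 * s := by
    have : 0 ≤ s / 4 + (m - 6) * g := by linarith
    nlinarith [mul_nonneg (by positivity : 0 ≤ m * B ^ 2 * s) this]
  have h2 : 0 ≤ m * B ^ 2 * s ^ 2 / 4 + g ^ 2 * m ^ 4 * (m - 3) * s ^ 2 := by
    have hm3 : m * (3 - m) ≤ 9 / 4 := by nlinarith [sq_nonneg (m - 3 / 2)]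
    have hg2 : g ^ 2 ≤ 9 / 4 := by nlinarith
    have : g ^ 2 * m ^ 3 * (3 - m) ≤ B ^ 2 / 4 := by
      nlinarith [mul_le_mul_of_nonneg_left hm3 (by positivity : 0 ≤ g ^ 2 * m ^ 2),
        mul_le_mul_of_nonneg_right hg2 (by positivity : 0 ≤ m ^ 2)]
    nlinarith [mul_nonneg (by positivity : 0 ≤ m * s ^ 2) (sub_nonneg.mpr this)]
  have h3 : 0 ≤ m * B ^ 2 * s ^ 2 / 4 + 2 * (m - 6) * g * m ^ 2 * s * w := by
    have : 72 * m * ε ≤ B ^ 2 := by nlinarith [mul_nonneg (by linarith : 0 ≤ m - 1) hε]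
    nlinarith [mul_le_mul_of_nonneg_left hw (by positivity : 0 ≤ m ^ 2 * s),
      mul_nonneg (by positivity : 0 ≤ m ^ 2 * s * w) hmg,
      mul_nonneg (by positivity : 0 ≤ m * s ^ 2) (sub_nonneg.mpr this)]
  have h4 : 0 ≤ m * B ^ 2 * s ^ 2 / 4 + (m - 8) * w ^ 2 := by
    have hw2 : w ^ 2 ≤ (ε * s) ^ 2 := pow_le_pow_left₀ hw0 hw 2
    have : 28 * ε ^ 2 ≤ m * B ^ 2 := by
      nlinarith [mul_nonneg (by linarith : 0 ≤ m - 1) (sq_nonneg B),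
        mul_nonneg (by nlinarith : 0 ≤ m ^ 2 - 1) (sq_nonneg ε)]
    nlinarith [mul_nonneg (by linarith : 0 ≤ m - 1) (sq_nonneg w),
      mul_nonneg (sq_nonneg s) (sub_nonneg.mpr this)]
  linarith

theorem Fop_evenLaurent_le {n : ℕ} (hn : 2 ≤ n) {g B ε s t r : ℝ} (hg0 : 0 ≤ g) (hg : g ≤ 3 / 2)
    (hs : 36 ≤ s) (hB : 10 * (n - 1) * (1 + ε) ≤ B) (ht : 0 < t) (hr : r ≠ 0)
    (hregion : B ^ 2 * t / r ^ 2 ≤ ε * s) :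
    Fop n (evenLaurent (g * (n - 1) / (2 * s)) (g * (n - 1) ^ 2 * t / s) (B ^ 2 * t ^ 2 / s ^ 2)) r
      ≤ g * (n - 1) / (2 * t * s ^ 2) + g * (n - 1) ^ 2 * (1 / s + 1 / s ^ 2) / r ^ 2
        + B ^ 2 * (2 * t / s ^ 2 + 2 * t / s ^ 3) / r ^ 4 := by
  rw [Fop_evenLaurent n _ _ _ hr, ← sub_nonneg]
  have hm : (1 : ℝ) ≤ n - 1 := by
    have : (2 : ℝ) ≤ n := by exact_mod_cast hn
    linarith
  generalize hmn : (n : ℝ) - 1 = m at hm hB ⊢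
  rw [show (n : ℝ) = m + 1 by linarith]
  have hs0 : 0 < s := by linarith
  have hε : 0 ≤ ε :=
    nonneg_of_mul_nonneg_left ((by positivity : (0 : ℝ) ≤ B ^ 2 * t / r ^ 2).trans hregion) hs0
  have hB2 : (10 * m) ^ 2 ≤ B ^ 2 := pow_le_pow_left₀ (by positivity) (by nlinarith) 2
  have hc2 : 0 ≤ B ^ 2 * s + B ^ 2 + g ^ 2 * m ^ 3 * (m - 2) * s := by
    have : g ^ 2 * m ^ 3 * (2 - m) ≤ B ^ 2 := by
      nlinarith [mul_nonneg (mul_nonneg (sq_nonneg g) (sq_nonneg m)) (sq_nonneg (m - 1)),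
        mul_le_mul_of_nonneg_right ((by nlinarith : g ^ 2 ≤ 9 / 4)) (sq_nonneg m)]
    nlinarith [mul_le_mul_of_nonneg_right this hs0.le, sq_nonneg B]
  have hP := supersolution_remainder_nonneg hm hg0 hg hs hB (w := B ^ 2 * t / r ^ 2)
    (by positivity) hregion
  -- `∂ₜv - F[v]`, grouped by powers of `r⁻²`
  have hD : 0 ≤ g * m / (2 * t * s ^ 2) + (g * m ^ 2 / s ^ 2 + g ^ 2 * m ^ 3 / (2 * s ^ 2)) / r ^ 2
      + 2 * t / s ^ 3 * (B ^ 2 * s + B ^ 2 + g ^ 2 * m ^ 3 * (m - 2) * s) / r ^ 4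
      + 2 * t ^ 2 / (s ^ 4 * r ^ 6) * (m * B ^ 2 * s ^ 2 + (m - 6) * g * m * B ^ 2 * s
        + g ^ 2 * m ^ 4 * (m - 3) * s ^ 2 + 2 * (m - 6) * g * m ^ 2 * s * (B ^ 2 * t / r ^ 2)
        + (m - 8) * (B ^ 2 * t / r ^ 2) ^ 2) := by
    have hm0 : 0 ≤ m := by linarith
    exact add_nonneg (add_nonneg (add_nonneg (by positivity) (by positivity))
      (div_nonneg (mul_nonneg (by positivity) hc2) (by positivity))) (mul_nonneg (by positivity) hP)
  convert hD using 1
  field_simp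
  ring

theorem mul_div_sq_le_of_div_sqrt_mul_sqrt_le {B ε t s r : ℝ} (hB : 0 ≤ B) (hε : 0 < ε)
    (hs : 0 < s) (ht : 0 ≤ t) (h : B / √ε * √(t / s) ≤ r) : B ^ 2 * t / r ^ 2 ≤ ε * s := by
  rcases eq_or_ne r 0 with rfl | hr
  · simpa using mul_nonneg hε.le hs.le
  have h2 := pow_le_pow_left₀ (by positivity) h 2
  rw [mul_pow, div_pow, sq_sqrt hε.le, sq_sqrt (by positivity), div_mul_div_comm,
    div_le_iff₀ (by positivity)] at h2
  rw [div_le_iff₀ (by positivity)]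
  linarith

theorem stmt5_general (n : ℕ) (hn : 2 ≤ n) (A ε : ℝ) (hε : 0 < ε) :
    ∃ B > (1:ℝ), ∃ tstar ∈ Ioo (0:ℝ) (Real.exp (-1)),
      ∀ γ ∈ Icc (0:ℝ) (1/2),
        ∀ r t : ℝ,
          B / Real.sqrt ε * Real.sqrt (t / (-Real.log t)) ≤ r →
          r ≤ 3 * (A / Real.sqrt ε) * Real.sqrt t →
          0 < t → t < tstar →
          Fop n (fun ρ => vParSup n γ B ρ t) r ≤ deriv (fun s => vParSup n γ B r s) t := by
  have hm : (1 : ℝ) ≤ n - 1 := by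
    have : (2 : ℝ) ≤ n := by exact_mod_cast hn
    linarith
  refine ⟨10 * (n - 1) * (1 + ε), by nlinarith, exp (-36),
    ⟨exp_pos _, exp_lt_exp.mpr (by norm_num)⟩, ?_⟩
  rintro γ ⟨hγ0, hγ1⟩ r t hr - ht htstar
  have hs : 36 ≤ -log t := by
    have := log_lt_log ht htstar
    rw [log_exp] at this
    linarith
  have hB : 0 < 10 * ((n : ℝ) - 1) * (1 + ε) := mul_pos (by linarith) (by linarith)
  have hr0 : 0 < r :=
    (mul_pos (div_pos hB (sqrt_pos.2 hε)) (sqrt_pos.2 (div_pos ht (by linarith)))).trans_le hr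
  rw [funext fun ρ => vParSup_eq_evenLaurent n γ _ ρ ht.le,
    (hasDerivAt_vParSup_time n γ _ r ht (by linarith)).deriv]
  exact Fop_evenLaurent_le hn (by linarith) (by linarith) hs le_rfl ht hr0.ne'
    (mul_div_sq_le_of_div_sqrt_mul_sqrt_le hB.le hε (by linarith) ht.le hr)

/-- Parabolic-region supersolution: for suitable `B > 1` and `t_* ∈ (0, 1/e)`, `v⁺` is a
supersolution of `v_t = F[v]` on `(B/√ε)√(t/(-log t)) ≤ r ≤ 3ρ_*√t`, `0 < t < t_*`,
for every `γ ∈ [0, 1/2]`. -/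
theorem stmt5 (n : ℕ) (hn : 2 ≤ n) (A ε : ℝ) (hA : 0 < A) (hε : 0 < ε) :
    ∃ B > (1:ℝ), ∃ tstar ∈ Ioo (0:ℝ) (Real.exp (-1)),
      ∀ γ ∈ Icc (0:ℝ) (1/2),
        ∀ r t : ℝ,
          B / Real.sqrt ε * Real.sqrt (t / (-Real.log t)) ≤ r →
          r ≤ 3 * (A / Real.sqrt ε) * Real.sqrt t →
          0 < t → t < tstar →
          Fop n (fun ρ => vParSup n γ B ρ t) r ≤ deriv (fun s => vParSup n γ B r s) t :=
  stmt5_general n hn A ε hε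
end
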